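/- arXiv:hep-th/0306062 — 4 statements merged into one kernel-verified Lean document; each statement's English description precedes it below -/
import Mathlib

section
/- With notation as above, H = A ∧ π*F̂ − π*Ω is a closed 3-form on E if and only if F ∧ F̂ = dΩ on M; and in that case Ĥ = π̂*F ∧ Â − π̂*Ω is a closed 3-form on Ê. -/
/-- With the notation of Statement 7 (forms abstracted as a ring `C` with
additive differential `d`; `A`, `Â` odd connection forms with `dA = F`, `dÂ = F̂`, the
curvatures `F`, `F̂` closed even forms pulled back from `M`, `Ω` a 3-form on `M`):
`H = A ∧ F̂ − Ω` is closed iff `F ∧ F̂ = dΩ`, and in that case `Ĥ = F ∧ Â − Ω` is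
also closed. -/
theorem H_closed_iff_FF_eq_dOmega
    {C : Type*} [Ring C] (d : C →+ C)
    (A Ahat F Fhat Ω : C)
    (hdA : d A = F) (hdAhat : d Ahat = Fhat)
    (hdF : d F = 0) (hdFhat : d Fhat = 0)
    (hLeib1 : d (A * Fhat) = d A * Fhat - A * d Fhat)   -- Leibniz: odd ∧ even
    (hLeib2 : d (F * Ahat) = d F * Ahat + F * d Ahat)   -- Leibniz: even ∧ odd
    : (d (A * Fhat - Ω) = 0 ↔ F * Fhat = d Ω) ∧
      (F * Fhat = d Ω → d (F * Ahat - Ω) = 0) := by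
  have h1 : d (A * Fhat - Ω) = F * Fhat - d Ω := by
    rw [map_sub, hLeib1, hdA, hdFhat, mul_zero, sub_zero]
  have h2 : d (F * Ahat - Ω) = F * Fhat - d Ω := by
    rw [map_sub, hLeib2, hdF, hdAhat, zero_mul, zero_add]
  constructor
  · rw [h1, sub_eq_zero]
  · intro h; rw [h2, h, sub_self]
end

section
/- Let X be a finite CW complex and H ∈ H³(X, Z). Define the 'd₃-cohomology' groups K̃⁰ = ker(H∪ : H^{even}(X,Z) → H^{odd}(X,Z)) / (H ∪ H^{odd}(X,Z)) and K̃¹ analogously with even and odd swapped. For X = T³ (the 3-torus) with H = k times a generator of H³(T³,Z) ≅ Z, k ≠ 0, one has K̃⁰ ≅ Z³ and K̃¹ ≅ Z³ ⊕ Z/k. -/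
/-- `H^{even}(T³,Z) = H⁰ ⊕ H² ≅ ℤ × ℤ³` and `H^{odd}(T³,Z) = H¹ ⊕ H³ ≅ ℤ³ × ℤ`.
Cup product with `H = k·(generator of H³)` on even cohomology: only the component
`H⁰ → H³`, `1 ↦ k`, is nonzero. -/
def cupT3even (k : ℕ) : ℤ × (Fin 3 → ℤ) →+ (Fin 3 → ℤ) × ℤ :=
  AddMonoidHom.prod 0 ((AddMonoidHom.mul (k : ℤ)).comp (AddMonoidHom.fst ℤ (Fin 3 → ℤ)))

/-- Cup product with `H` on odd cohomology is zero (it raises degree by 3, landing in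
`H⁴ ⊕ H⁶ = 0`). -/
def cupT3odd : (Fin 3 → ℤ) × ℤ →+ ℤ × (Fin 3 → ℤ) := 0

/-- `K̃⁰ = ker(H∪ : H^{even} → H^{odd}) / (H ∪ H^{odd})`. -/
abbrev KtildeT3zero (k : ℕ) :=
  (cupT3even k).ker ⧸ (cupT3odd.range.addSubgroupOf (cupT3even k).ker)

/-- `K̃¹ = ker(H∪ : H^{odd} → H^{even}) / (H ∪ H^{even})`. -/
abbrev KtildeT3one (k : ℕ) :=
  cupT3odd.ker ⧸ ((cupT3even k).range.addSubgroupOf cupT3odd.ker)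

/-- For `X = T³` with `H = k` times a generator of `H³(T³,Z) ≅ Z`, `k ≠ 0`,
the `d₃`-cohomology groups satisfy `K̃⁰ ≅ Z³` and `K̃¹ ≅ Z³ ⊕ Z/k`. -/
theorem d3_cohomology_three_torus (k : ℕ) (hk : k ≠ 0) :
    Nonempty (KtildeT3zero k ≃+ (Fin 3 → ℤ)) ∧
    Nonempty (KtildeT3one k ≃+ (Fin 3 → ℤ) × ZMod k) := by
  constructor
  · -- φ₀ : ker →+ ℤ³
    set φ : (cupT3even k).ker →+ (Fin 3 → ℤ) :=
      (AddMonoidHom.snd ℤ (Fin 3 → ℤ)).comp (cupT3even k).ker.subtype with hφ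
    have hsurj : Function.Surjective φ := by
      intro v
      refine ⟨⟨(0, v), ?_⟩, rfl⟩
      simp [AddMonoidHom.mem_ker, cupT3even, Prod.ext_iff]
    have hker : cupT3odd.range.addSubgroupOf (cupT3even k).ker = φ.ker := by
      ext x
      simp only [AddSubgroup.mem_addSubgroupOf, AddMonoidHom.mem_range, cupT3odd,
        AddMonoidHom.mem_ker, hφ, AddMonoidHom.coe_comp, Function.comp_apply,
        AddMonoidHom.coe_snd, AddSubgroup.coe_subtype]
      constructor
      · rintro ⟨y, hy⟩
        simp only [AddMonoidHom.zero_apply] at hy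
        rw [← hy]; rfl
      · intro h2
        have hx := x.2
        simp only [AddMonoidHom.mem_ker, cupT3even, AddMonoidHom.prod_apply, Prod.ext_iff,
          AddMonoidHom.coe_comp, Function.comp_apply, AddMonoidHom.coe_fst,
          AddMonoidHom.mul_apply, AddMonoidHom.zero_apply, Prod.fst_zero, Prod.snd_zero] at hx
        have h1 : (x : ℤ × (Fin 3 → ℤ)).1 = 0 := by
          have := hx.2
          rcases mul_eq_zero.mp this with h | h
          · exact absurd (by exact_mod_cast h) hk
          · exact h
        refine ⟨0, ?_⟩
        have : (x : ℤ × (Fin 3 → ℤ)) = 0 := Prod.ext h1 h2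
        simp [this]
    exact ⟨(QuotientAddGroup.quotientAddEquivOfEq hker).trans
      (QuotientAddGroup.quotientKerEquivOfSurjective φ hsurj)⟩
  · set φ : cupT3odd.ker →+ (Fin 3 → ℤ) × ZMod k :=
      ((AddMonoidHom.fst (Fin 3 → ℤ) ℤ).prod
        ((Int.castAddHom (ZMod k)).comp (AddMonoidHom.snd (Fin 3 → ℤ) ℤ))).comp
        cupT3odd.ker.subtype with hφ
    have hsurj : Function.Surjective φ := by
      rintro ⟨v, c⟩
      obtain ⟨a, ha⟩ := ZMod.intCast_surjective c
      refine ⟨⟨(v, a), ?_⟩, ?_⟩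
      · simp [AddMonoidHom.mem_ker, cupT3odd]
      · simp [hφ, Prod.ext_iff, ha]
    have hker : (cupT3even k).range.addSubgroupOf cupT3odd.ker = φ.ker := by
      ext x
      simp only [AddSubgroup.mem_addSubgroupOf, AddMonoidHom.mem_range, cupT3even,
        AddMonoidHom.mem_ker, hφ, AddMonoidHom.coe_comp, Function.comp_apply,
        AddSubgroup.coe_subtype, AddMonoidHom.prod_apply, AddMonoidHom.coe_fst,
        AddMonoidHom.coe_snd, Int.coe_castAddHom, Prod.ext_iff, Prod.fst_zero, Prod.snd_zero,
        AddMonoidHom.coe_mul, AddMonoidHom.mul_apply, AddMonoidHom.zero_apply]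
      constructor
      · rintro ⟨⟨a, w⟩, h1, h2⟩
        refine ⟨h1.symm, ?_⟩
        rw [← h2]
        simp [ZMod.intCast_zmod_eq_zero_iff_dvd, Dvd.intro, dvd_mul_right]
      · rintro ⟨h1, h2⟩
        rw [ZMod.intCast_zmod_eq_zero_iff_dvd] at h2
        obtain ⟨a, ha⟩ := h2
        exact ⟨(a, 0), h1.symm, ha.symm⟩
    exact ⟨(QuotientAddGroup.quotientAddEquivOfEq hker).trans
      (QuotientAddGroup.quotientKerEquivOfSurjective φ hsurj)⟩
end

section
/- With K̃⁰, K̃¹ defined as the cup-product-with-H cohomology as above, for the lens space L(1,j) (circle bundle of Euler class j ≠ 0 over S²) with H = k ≠ 0 times the generator of H³ ≅ Z, one has K̃⁰ ≅ Z/j and K̃¹ ≅ Z/k; in particular K̃⁰(L(1,j), H=k) ≅ K̃¹(L(1,k), H=j), exhibiting the T-duality exchange of j and k. -/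
/-- `H^{even}(L(1,j),Z) = H⁰ ⊕ H² ≅ ℤ × Z/j` and `H^{odd}(L(1,j),Z) = H¹ ⊕ H³ ≅ 0 ⊕ ℤ`.
Cup product with `H = k·(generator of H³ ≅ Z)` on even cohomology: `H⁰ → H³` is
multiplication by `k`, all else vanishes. -/
def cupLens (j k : ℕ) : ℤ × ZMod j →+ ℤ :=
  (AddMonoidHom.mul (k : ℤ)).comp (AddMonoidHom.fst ℤ (ZMod j))

/-- Cup product with `H` on odd cohomology is zero (lands in degrees > 3). -/
def cupLensOdd (j : ℕ) : ℤ →+ ℤ × ZMod j := 0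

/-- `K̃⁰(L(1,j), H=k) = ker(H∪ : even → odd) / (H ∪ odd)`. -/
abbrev KtildeLens0 (j k : ℕ) :=
  (cupLens j k).ker ⧸ ((cupLensOdd j).range.addSubgroupOf (cupLens j k).ker)

/-- `K̃¹(L(1,j), H=k) = ker(H∪ : odd → even) / (H ∪ even)`. -/
abbrev KtildeLens1 (j k : ℕ) :=
  (cupLensOdd j).ker ⧸ ((cupLens j k).range.addSubgroupOf (cupLensOdd j).ker)

noncomputable def equiv0 (j k : ℕ) (hk : k ≠ 0) : KtildeLens0 j k ≃+ ZMod j := by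
  refine AddEquiv.ofBijective
    (QuotientAddGroup.lift _
      ((AddMonoidHom.snd ℤ (ZMod j)).comp (cupLens j k).ker.subtype) ?_) ⟨?_, ?_⟩
  · rintro ⟨x, hx⟩ hmem
    simp only [AddSubgroup.mem_addSubgroupOf, AddMonoidHom.mem_range, cupLensOdd] at hmem
    obtain ⟨a, ha⟩ := hmem
    simp only [AddMonoidHom.zero_apply] at ha
    simp [← ha]
  · rw [injective_iff_map_eq_zero]
    intro q
    induction q using QuotientAddGroup.induction_on with
    | H x =>
      intro hx0
      simp only [QuotientAddGroup.lift_mk, AddMonoidHom.comp_apply,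
        AddSubgroup.coe_subtype, AddMonoidHom.coe_snd] at hx0
      have hker := x.2
      simp only [AddMonoidHom.mem_ker, cupLens, AddMonoidHom.comp_apply,
        AddMonoidHom.coe_fst, AddMonoidHom.mul_apply] at hker
      have h1 : (x : ℤ × ZMod j).1 = 0 := by
        rcases mul_eq_zero.mp hker with h | h
        · exact absurd (Int.ofNat_eq_zero.mp h) hk
        · exact h
      rw [QuotientAddGroup.eq_zero_iff]
      simp only [AddSubgroup.mem_addSubgroupOf, AddMonoidHom.mem_range, cupLensOdd]
      refine ⟨0, ?_⟩
      simp only [AddMonoidHom.zero_apply]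
      have : (x : ℤ × ZMod j) = 0 := Prod.ext h1 hx0
      exact this.symm
  · intro b
    refine ⟨QuotientAddGroup.mk ⟨(0, b), ?_⟩, ?_⟩
    · simp [AddMonoidHom.mem_ker, cupLens]
    · simp

noncomputable def equiv1 (j k : ℕ) : KtildeLens1 j k ≃+ ZMod k := by
  refine AddEquiv.ofBijective
    (QuotientAddGroup.lift _
      ((Int.castAddHom (ZMod k)).comp (cupLensOdd j).ker.subtype) ?_) ⟨?_, ?_⟩
  · rintro ⟨x, hx⟩ hmem
    simp only [AddSubgroup.mem_addSubgroupOf, AddMonoidHom.mem_range, cupLens] at hmem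
    obtain ⟨a, ha⟩ := hmem
    simp only [AddMonoidHom.comp_apply, AddMonoidHom.coe_fst, AddMonoidHom.mul_apply] at ha
    rw [← ha]
    simp
  · rw [injective_iff_map_eq_zero]
    intro q
    induction q using QuotientAddGroup.induction_on with
    | H x =>
      intro hx0
      simp only [QuotientAddGroup.lift_mk, AddMonoidHom.comp_apply,
        AddSubgroup.coe_subtype, Int.coe_castAddHom] at hx0
      rw [ZMod.intCast_zmod_eq_zero_iff_dvd] at hx0
      obtain ⟨m, hm⟩ := hx0
      rw [QuotientAddGroup.eq_zero_iff]
      simp only [AddSubgroup.mem_addSubgroupOf, AddMonoidHom.mem_range, cupLens]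
      exact ⟨(m, 0), by simp [hm, mul_comm]⟩
  · intro b
    obtain ⟨n, hn⟩ := ZMod.intCast_surjective (n := k) b
    refine ⟨QuotientAddGroup.mk ⟨n, ?_⟩, ?_⟩
    · simp [AddMonoidHom.mem_ker, cupLensOdd]
    · simp [hn]

/-- For the lens space `L(1,j)` (circle bundle of Euler class `j ≠ 0` over
`S²`) with `H = k ≠ 0` times the generator of `H³ ≅ Z`: `K̃⁰ ≅ Z/j` and `K̃¹ ≅ Z/k`;
in particular `K̃⁰(L(1,j), H=k) ≅ K̃¹(L(1,k), H=j)`, exhibiting the T-duality exchange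
of `j` and `k`. -/
theorem d3_cohomology_lens_space_T_duality (j k : ℕ) (hj : j ≠ 0) (hk : k ≠ 0) :
    Nonempty (KtildeLens0 j k ≃+ ZMod j) ∧
    Nonempty (KtildeLens1 j k ≃+ ZMod k) ∧
    Nonempty (KtildeLens0 j k ≃+ KtildeLens1 k j) := by
  exact ⟨⟨equiv0 j k hk⟩, ⟨equiv1 j k⟩, ⟨(equiv0 j k hk).trans (equiv1 k j).symm⟩⟩
end

section
/- For X = RP² × S¹ with H the nonzero element of H³(X, Z) ≅ Z/2, the cup-product-with-H cohomology groups are K̃⁰ ≅ Z ⊕ Z/2 and K̃¹ ≅ Z. Here H∪ : H⁰ ≅ Z → H³ ≅ Z/2 is reduction mod 2, so its kernel is 2Z ≅ Z. -/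
/-- `H^{even}(RP² × S¹, Z) = H⁰ ⊕ H² ≅ ℤ × Z/2` and
`H^{odd}(RP² × S¹, Z) = H¹ ⊕ H³ ≅ ℤ × Z/2` (by Künneth). Cup product with the nonzero
`H ∈ H³ ≅ Z/2` on even cohomology: the only nontrivial component is
`H⁰ ≅ Z → H³ ≅ Z/2`, reduction mod 2. -/
def cupRP2S1even : ℤ × ZMod 2 →+ ℤ × ZMod 2 :=
  AddMonoidHom.prod 0 ((Int.castAddHom (ZMod 2)).comp (AddMonoidHom.fst ℤ (ZMod 2)))

/-- Cup product with `H` on odd cohomology is zero (it lands in `H⁴ ⊕ H⁶ = 0` for the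
3-manifold `RP² × S¹`). -/
def cupRP2S1odd : ℤ × ZMod 2 →+ ℤ × ZMod 2 := 0

/-- `K̃⁰ = ker(H∪ on even) / (H ∪ odd)`. -/
abbrev KtildeRP2S1zero :=
  cupRP2S1even.ker ⧸ (cupRP2S1odd.range.addSubgroupOf cupRP2S1even.ker)

/-- `K̃¹ = ker(H∪ on odd) / (H ∪ even)`. -/
abbrev KtildeRP2S1one :=
  cupRP2S1odd.ker ⧸ (cupRP2S1even.range.addSubgroupOf cupRP2S1odd.ker)


lemma mem_ker_even (x : ℤ × ZMod 2) : x ∈ cupRP2S1even.ker ↔ 2 ∣ x.1 := by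
  simp [cupRP2S1even, AddMonoidHom.mem_ker, Prod.ext_iff,
    ZMod.intCast_zmod_eq_zero_iff_dvd]

noncomputable def h0 : cupRP2S1even.ker →+ ℤ × ZMod 2 where
  toFun x := (x.1.1 / 2, x.1.2)
  map_zero' := by simp
  map_add' x y := by
    obtain ⟨a, ha⟩ := (mem_ker_even _).1 x.2
    obtain ⟨b, hb⟩ := (mem_ker_even _).1 y.2
    have : (x : ℤ × ZMod 2).1 + (y : ℤ × ZMod 2).1 = 2 * (a + b) := by
      rw [ha, hb]; ring
    ext <;> simp [ha, hb, this, Int.mul_ediv_cancel_left] <;> omega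

def h1 : cupRP2S1odd.ker →+ ℤ :=
  (AddMonoidHom.fst ℤ (ZMod 2)).comp cupRP2S1odd.ker.subtype

/-- For `X = RP² × S¹` with `H` the nonzero element of `H³(X,Z) ≅ Z/2`,
the cup-product-with-`H` cohomology groups are `K̃⁰ ≅ Z ⊕ Z/2` and `K̃¹ ≅ Z`
(the kernel of `H∪ : H⁰ ≅ Z → H³ ≅ Z/2`, reduction mod 2, is `2Z ≅ Z`). -/
theorem d3_cohomology_RP2_times_circle :
    Nonempty (KtildeRP2S1zero ≃+ ℤ × ZMod 2) ∧
    Nonempty (KtildeRP2S1one ≃+ ℤ) := by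
  constructor
  · set N := cupRP2S1odd.range.addSubgroupOf cupRP2S1even.ker with hN
    have hcond : ∀ x ∈ N, h0 x = 0 := by
      rintro x hx
      have : (x : ℤ × ZMod 2) ∈ cupRP2S1odd.range := hx
      obtain ⟨y, hy⟩ := this
      have hx0 : (x : ℤ × ZMod 2) = 0 := by simpa [cupRP2S1odd] using hy.symm
      have : x = 0 := Subtype.ext hx0
      simp [this]
    refine ⟨AddEquiv.ofBijective (QuotientAddGroup.lift N h0 hcond) ⟨?_, ?_⟩⟩
    · rw [injective_iff_map_eq_zero]
      intro q
      induction q using QuotientAddGroup.induction_on with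
      | H x =>
        intro hx
        obtain ⟨a, ha⟩ := (mem_ker_even _).1 x.2
        have h1' : (x : ℤ × ZMod 2).1 / 2 = 0 ∧ (x : ℤ × ZMod 2).2 = 0 := by
          simpa [h0, Prod.ext_iff] using hx
        have : (x : ℤ × ZMod 2).1 = 0 := by
          have := h1'.1
          rw [ha, Int.mul_ediv_cancel_left _ (by norm_num)] at this
          simp [ha, this]
        have hx0 : x = 0 := Subtype.ext (Prod.ext this h1'.2)
        simp [hx0]
    · intro z
      refine ⟨QuotientAddGroup.mk ⟨(2 * z.1, z.2), (mem_ker_even _).2 ⟨z.1, rfl⟩⟩, ?_⟩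
      simp [h0, Int.mul_ediv_cancel_left]
  · set N := cupRP2S1even.range.addSubgroupOf cupRP2S1odd.ker with hN
    have hcond : ∀ x ∈ N, h1 x = 0 := by
      rintro x hx
      obtain ⟨y, hy⟩ := (hx : (x : ℤ × ZMod 2) ∈ cupRP2S1even.range)
      have : (x : ℤ × ZMod 2).1 = 0 := by
        have h := congrArg Prod.fst hy
        simpa [cupRP2S1even] using h.symm
      simpa [h1] using this
    refine ⟨AddEquiv.ofBijective (QuotientAddGroup.lift N h1 hcond) ⟨?_, ?_⟩⟩
    · rw [injective_iff_map_eq_zero]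
      intro q
      induction q using QuotientAddGroup.induction_on with
      | H x =>
        intro hx
        have hx1 : (x : ℤ × ZMod 2).1 = 0 := hx
        rw [QuotientAddGroup.eq_zero_iff]
        refine (AddSubgroup.mem_addSubgroupOf).2
          ⟨(((x : ℤ × ZMod 2).2.val : ℤ), 0), ?_⟩
        ext
        · simp [cupRP2S1even, hx1]
        · simp [cupRP2S1even, ZMod.natCast_val, ZMod.intCast_cast, ZMod.cast_id]
    · intro z
      refine ⟨QuotientAddGroup.mk ⟨(z, 0), ?_⟩, rfl⟩
      simp [AddMonoidHom.mem_ker, cupRP2S1odd]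
end
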